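/- arXiv:2003.13677 — 2 statements merged into one kernel-verified Lean document; each statement's English description precedes it below -/
import Mathlib

section
/- Let R be a Noetherian ring of prime characteristic p and 𝔞, J ideals with 𝔞 ⊆ √J. Then for all nonnegative integers e_1, e_2: ν_𝔞^J(p^{e_1+e_2})/p^{e_1+e_2} − ν_𝔞^J(p^{e_1})/p^{e_1} ≤ μ(𝔞)/p^{e_1}, where μ(𝔞) is the minimal number of generators of 𝔞 and ν_𝔞^J(p^e) = max{ m : 𝔞^m ⊄ J^{[p^e]} }. -/
open Filter

section Defs
variable (p : ℕ) {R : Type*} [CommRing R]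

/-- A `p^{-e}`-linear (Cartier) operator on `R`: under the identification of `R^{1/p^e}`
with `R` (sending `f^{1/p^e}` to `f`), these are exactly the `R`-linear maps
`R^{1/p^e} → R`. -/
def IsCartier (e : ℕ) (φ : R →+ R) : Prop :=
  ∀ a x : R, φ (a ^ p ^ e * x) = a * φ x

/-- `R` is `F`-pure: the inclusion `R ⊆ R^{1/p^e}` splits as a map of `R`-modules,
equivalently there is a Cartier operator sending `1` to `1`. -/
def FPure (R : Type*) [CommRing R] : Prop :=
  ∀ e : ℕ, ∃ φ : R →+ R, IsCartier p e φ ∧ φ 1 = 1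

/-- `R` is `F`-finite: `R^{1/p^e}` is a finitely generated `R`-module, i.e. `R` is a
finitely generated module over its subring of `p^e`-th powers. -/
def FFinite (R : Type*) [CommRing R] : Prop :=
  ∀ e : ℕ, ∃ s : Finset R, ∀ x : R, ∃ c : R → R, x = ∑ y ∈ s, c y ^ p ^ e * y

/-- The Frobenius power `J^{[q]}`, generated by the `q`-th powers of elements of `J`. -/
def frobeniusPower (J : Ideal R) (q : ℕ) : Ideal R :=
  Ideal.span ((fun f => f ^ q) '' (J : Set R))

/-- The Cartier contraction `J_e = { f | φ(f^{1/p^e}) ∈ J for all φ ∈ Hom_R(R^{1/p^e}, R) }`. -/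
def cartierContraction (e : ℕ) (J : Ideal R) : Ideal R where
  carrier := { f | ∀ φ : R →+ R, IsCartier p e φ → φ f ∈ J }
  add_mem' := fun ha hb φ hφ => by
    rw [map_add]; exact J.add_mem (ha φ hφ) (hb φ hφ)
  zero_mem' := fun φ hφ => by rw [map_zero]; exact J.zero_mem
  smul_mem' := by
    intro c f hf φ hφ
    have h : IsCartier p e (φ.comp (AddMonoidHom.mulLeft c)) := by
      intro a x
      simp only [AddMonoidHom.coe_comp, Function.comp_apply, AddMonoidHom.coe_mulLeft]
      rw [mul_left_comm]
      exact hφ a (c * x)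
    simpa using hf _ h

/-- The Cartier core `𝒫(J) = ⋂ₛ Jₛ`. -/
def cartierCore (J : Ideal R) : Ideal R := ⨅ s : ℕ, cartierContraction p s J

/-- `J` is uniformly `F`-compatible: `φ(J^{1/p^e}) ⊆ J` for all `e > 0` and all
`φ ∈ Hom_R(R^{1/p^e}, R)`. -/
def UniformlyFCompatible (J : Ideal R) : Prop :=
  ∀ e : ℕ, 0 < e → ∀ φ : R →+ R, IsCartier p e φ → ∀ f ∈ J, φ f ∈ J

/-- `ν_𝔞^J(q) = max { m | 𝔞^m ⊄ J^{[q]} }`. -/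
noncomputable def nuNum (𝔞 J : Ideal R) (q : ℕ) : ℕ :=
  sSup { m : ℕ | ¬ 𝔞 ^ m ≤ frobeniusPower J q }

/-- `b_𝔞^J(p^e) = max { t | 𝔞^t ⊄ J_e }`. -/
noncomputable def bNum (𝔞 J : Ideal R) (e : ℕ) : ℕ :=
  sSup { t : ℕ | ¬ 𝔞 ^ t ≤ cartierContraction p e J }

/-- `μ(𝔞)`, the minimal number of generators of `𝔞`. -/
noncomputable def muGen (𝔞 : Ideal R) : ℕ :=
  sInf { k : ℕ | ∃ s : Finset R, s.card = k ∧ Ideal.span (s : Set R) = 𝔞 }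

end Defs

/-!
Write `ν = ν_𝔞^J(p^{e₁})`, `q = p^{e₂}` and `μ = μ(𝔞)`. Since `𝔞^{ν+1} ⊆ J^{[p^{e₁}]}` and
Frobenius powers compose, `(𝔞^{ν+1})^{[q]} ⊆ J^{[p^{e₁+e₂}]}`. If `𝔞` is generated by `μ`
elements, a monomial of degree `νq + μ(q-1) + 1` in them has, by pigeonhole, exponents whose
quotients by `q` add up to at least `ν + 1`, so `𝔞^{νq + μ(q-1) + 1} ⊆ (𝔞^{ν+1})^{[q]}`.
Hence `ν_𝔞^J(p^{e₁+e₂}) ≤ νq + μ(q-1) ≤ (ν + μ)q`; dividing by `p^{e₁+e₂}` gives the claim.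
-/

open Finset

section FrobeniusPower
variable {R : Type*} [CommRing R]

lemma frobeniusPower_mono {I J : Ideal R} (h : I ≤ J) (q : ℕ) :
    frobeniusPower I q ≤ frobeniusPower J q :=
  Ideal.span_mono (Set.image_mono h)

lemma pow_mem_frobeniusPower {J : Ideal R} {x : R} (hx : x ∈ J) (q : ℕ) :
    x ^ q ∈ frobeniusPower J q :=
  Ideal.subset_span ⟨x, hx, rfl⟩

lemma radical_le_radical_frobeniusPower (J : Ideal R) (q : ℕ) :
    J.radical ≤ (frobeniusPower J q).radical :=
  Ideal.radical_le_radical_iff.2 fun _ hx => ⟨q, pow_mem_frobeniusPower hx q⟩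

lemma frobeniusPower_eq_map_iterateFrobenius (p : ℕ) [ExpChar R p] (J : Ideal R) (e : ℕ) :
    frobeniusPower J (p ^ e) = J.map (iterateFrobenius R p e) :=
  rfl

lemma frobeniusPower_frobeniusPower (p : ℕ) [ExpChar R p] (J : Ideal R) (e₁ e₂ : ℕ) :
    frobeniusPower (frobeniusPower J (p ^ e₁)) (p ^ e₂) = frobeniusPower J (p ^ (e₁ + e₂)) := by
  simp only [frobeniusPower_eq_map_iterateFrobenius, Ideal.map_map, add_comm e₁ e₂,
    iterateFrobenius_add]

end FrobeniusPower

section Pigeonhole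
variable {R : Type*} [CommRing R]

lemma Finset.sum_le_mul_sum_div_add_card_mul {ι : Type*} (s : Finset ι) (c : ι → ℕ) {q : ℕ}
    (hq : 0 < q) : ∑ i ∈ s, c i ≤ q * ∑ i ∈ s, c i / q + #s * (q - 1) :=
  calc ∑ i ∈ s, c i ≤ ∑ i ∈ s, (q * (c i / q) + (q - 1)) := sum_le_sum fun i _ => by
        have := Nat.div_add_mod (c i) q
        have := Nat.mod_lt (c i) hq
        omega
    _ = q * ∑ i ∈ s, c i / q + #s * (q - 1) := by
        rw [sum_add_distrib, mul_sum, sum_const, smul_eq_mul]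

lemma Ideal.prod_pow_mem_span_pow_sum (s : Finset R) (c : R → ℕ) :
    ∏ y ∈ s, y ^ c y ∈ Ideal.span (s : Set R) ^ ∑ y ∈ s, c y := by
  rw [← prod_pow_eq_pow_sum]
  exact Ideal.prod_mem_prod fun y hy => Ideal.pow_mem_pow (Ideal.subset_span hy) _

lemma Ideal.span_pow_le_of_forall_prod_pow_mem {s : Finset R} {n : ℕ} {I : Ideal R}
    (h : ∀ c : R → ℕ, ∑ y ∈ s, c y = n → ∏ y ∈ s, y ^ c y ∈ I) :
    Ideal.span (s : Set R) ^ n ≤ I := by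
  classical
  rw [Ideal.span, Submodule.span_pow, Submodule.span_le]
  intro _ hx
  obtain ⟨f, rfl⟩ := Set.mem_pow.1 hx
  have hmaps : ∀ i ∈ (univ : Finset (Fin n)), (f i : R) ∈ s := fun i _ => (f i).2
  have hprod : (List.ofFn fun i => (f i : R)).prod = ∏ y ∈ s, y ^ #{i | (f i : R) = y} := by
    rw [List.prod_ofFn, ← prod_fiberwise_of_maps_to hmaps]
    exact prod_congr rfl fun y _ => prod_eq_pow_card fun i hi => (mem_filter.1 hi).2
  rw [SetLike.mem_coe, hprod]
  exact h _ (by rw [← card_eq_sum_card_fiberwise hmaps, card_univ, Fintype.card_fin])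

lemma Ideal.span_pow_le_frobeniusPower_span_pow (s : Finset R) {q : ℕ} (hq : 0 < q) (m : ℕ) :
    Ideal.span (s : Set R) ^ (m * q + #s * (q - 1) + 1)
      ≤ frobeniusPower (Ideal.span (s : Set R) ^ (m + 1)) q := by
  refine Ideal.span_pow_le_of_forall_prod_pow_mem fun c hc => ?_
  have hsplit : ∏ y ∈ s, y ^ c y = (∏ y ∈ s, y ^ (c y / q)) ^ q * ∏ y ∈ s, y ^ (c y % q) := by
    rw [← prod_pow, ← prod_mul_distrib]
    exact prod_congr rfl fun y _ => by rw [← pow_mul, ← pow_add, Nat.div_add_mod']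
  have hdeg : m + 1 ≤ ∑ y ∈ s, c y / q := by
    have := s.sum_le_mul_sum_div_add_card_mul c hq
    exact Nat.lt_of_mul_lt_mul_left (a := q) (by rw [mul_comm q m]; omega)
  rw [hsplit]
  exact Ideal.mul_mem_right _ _ <| pow_mem_frobeniusPower
    (Ideal.pow_le_pow_right hdeg (Ideal.prod_pow_mem_span_pow_sum s _)) q

lemma exists_finset_card_eq_muGen_span_eq {𝔞 : Ideal R} (h : 𝔞.FG) :
    ∃ s : Finset R, #s = muGen 𝔞 ∧ Ideal.span (s : Set R) = 𝔞 := by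
  obtain ⟨s, hs⟩ := h
  exact Nat.sInf_mem (s := {k | ∃ s : Finset R, #s = k ∧ Ideal.span (s : Set R) = 𝔞})
    ⟨_, s, rfl, hs⟩

lemma pow_le_frobeniusPower_pow_of_fg {𝔞 : Ideal R} (h : 𝔞.FG) {q : ℕ} (hq : 0 < q) (m : ℕ) :
    𝔞 ^ (m * q + muGen 𝔞 * (q - 1) + 1) ≤ frobeniusPower (𝔞 ^ (m + 1)) q := by
  obtain ⟨s, hcard, rfl⟩ := exists_finset_card_eq_muGen_span_eq h
  rw [← hcard]
  exact Ideal.span_pow_le_frobeniusPower_span_pow s hq m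

end Pigeonhole

section NuNum
variable {R : Type*} [CommRing R] {𝔞 J : Ideal R}

lemma nuNum_le_of_pow_le {q n : ℕ} (h : 𝔞 ^ (n + 1) ≤ frobeniusPower J q) : nuNum 𝔞 J q ≤ n :=
  csSup_le' fun _ hm => not_lt.1 fun hlt => hm ((Ideal.pow_le_pow_right hlt).trans h)

lemma pow_nuNum_succ_le {q : ℕ} (h : ∃ n, 𝔞 ^ n ≤ frobeniusPower J q) :
    𝔞 ^ (nuNum 𝔞 J q + 1) ≤ frobeniusPower J q := by
  obtain ⟨n, hn⟩ := h
  have hbdd : BddAbove {m | ¬ 𝔞 ^ m ≤ frobeniusPower J q} :=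
    ⟨n, fun _ hm => not_lt.1 fun hlt => hm ((Ideal.pow_le_pow_right hlt.le).trans hn)⟩
  by_contra hc
  exact (le_csSup hbdd hc).not_gt (Nat.lt_succ_self _)

lemma exists_pow_le_frobeniusPower (h𝔞 : 𝔞 ≤ J.radical) (hfg : 𝔞.FG) (q : ℕ) :
    ∃ n, 𝔞 ^ n ≤ frobeniusPower J q :=
  Ideal.exists_pow_le_of_le_radical_of_fg (h𝔞.trans (radical_le_radical_frobeniusPower J q)) hfg

lemma nuNum_pow_add_le (p : ℕ) [ExpChar R p] (h𝔞 : 𝔞 ≤ J.radical) (hfg : 𝔞.FG) (e₁ e₂ : ℕ) :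
    nuNum 𝔞 J (p ^ (e₁ + e₂)) ≤ nuNum 𝔞 J (p ^ e₁) * p ^ e₂ + muGen 𝔞 * (p ^ e₂ - 1) := by
  apply nuNum_le_of_pow_le
  calc _ ≤ frobeniusPower (𝔞 ^ (nuNum 𝔞 J (p ^ e₁) + 1)) (p ^ e₂) :=
        pow_le_frobeniusPower_pow_of_fg hfg (pow_pos (expChar_pos R p) e₂) _
    _ ≤ frobeniusPower (frobeniusPower J (p ^ e₁)) (p ^ e₂) :=
        frobeniusPower_mono (pow_nuNum_succ_le (exists_pow_le_frobeniusPower h𝔞 hfg _)) _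
    _ = frobeniusPower J (p ^ (e₁ + e₂)) := frobeniusPower_frobeniusPower p J e₁ e₂

end NuNum

/-- For ideals `𝔞 ⊆ √J` in a Noetherian ring of prime characteristic `p`,
`ν_𝔞^J(p^{e₁+e₂})/p^{e₁+e₂} − ν_𝔞^J(p^{e₁})/p^{e₁} ≤ μ(𝔞)/p^{e₁}`. -/
theorem nu_quotients_diff_le_mu {R : Type*} [CommRing R] [IsNoetherianRing R]
    (p : ℕ) (hp : p.Prime) [CharP R p]
    (𝔞 J : Ideal R) (h𝔞 : 𝔞 ≤ J.radical) (e₁ e₂ : ℕ) :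
    (nuNum 𝔞 J (p ^ (e₁ + e₂)) : ℝ) / (p : ℝ) ^ (e₁ + e₂)
      - (nuNum 𝔞 J (p ^ e₁) : ℝ) / (p : ℝ) ^ e₁
      ≤ (muGen 𝔞 : ℝ) / (p : ℝ) ^ e₁ := by
  have : ExpChar R p := ExpChar.prime hp
  have hν : nuNum 𝔞 J (p ^ (e₁ + e₂)) ≤ (nuNum 𝔞 J (p ^ e₁) + muGen 𝔞) * p ^ e₂ :=
    (nuNum_pow_add_le p h𝔞 (IsNoetherian.noetherian 𝔞) e₁ e₂).trans
      (by rw [add_mul]; gcongr; exact Nat.sub_le _ _)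
  have hp₀ : (0 : ℝ) < p := by exact_mod_cast hp.pos
  rw [sub_le_iff_le_add, ← add_div, div_le_div_iff₀ (by positivity) (by positivity)]
  calc (nuNum 𝔞 J (p ^ (e₁ + e₂)) : ℝ) * (p ^ e₁)
      ≤ ((nuNum 𝔞 J (p ^ e₁) + muGen 𝔞) * p ^ e₂ : ℕ) * (p ^ e₁ : ℝ) := by gcongr
    _ = (muGen 𝔞 + nuNum 𝔞 J (p ^ e₁)) * p ^ (e₁ + e₂) := by push_cast; ring
end

section
/- Let (R, 𝔪, K) be an F-finite F-pure Noetherian local ring of prime characteristic p, f ∈ R, and J ⊆ R an ideal. Then f ∈ J_e if and only if f ∈ (J R̂)_e, where R̂ is the 𝔪-adic completion; i.e., Cartier contraction is compatible with completion. -/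
open Filter

/-!
Write `F_* R` for `R` viewed as an `R`-module through the `e`-th Frobenius, so that the Cartier
operators on `R` are the `R`-linear maps `F_* R → R`. By `F`-finiteness `F_* R` is finitely
presented over the Noetherian ring `R`, and a Cartier operator `ψ` on `R̂` restricts to an
`R`-linear map `F_* R → R̂`. Since `R̂` is flat, this map factors through a finite free module,
i.e. it is an `R̂`-combination of Cartier operators on `R`; so `ψ (f)` lies in `J R̂` when
`f ∈ J_e`.

Conversely, a Cartier operator `φ` maps `𝔪 ^ (c * n)` into `𝔪 ^ n` once `𝔪 ^ c ⊆ 𝔪^{[p^e]}`, so it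
extends `𝔪`-adically to a Cartier operator on `R̂`. If `f ∈ (J R̂)_e`, this puts `φ (f)` in
`J R̂ ∩ R = J`, by faithful flatness of `R̂`.
-/

theorem Module.Flat.apply_mem_map_of_forall_dual_apply_mem {R S M : Type*} [CommRing R]
    [CommRing S] [Algebra R S] [Module.Flat R S] [AddCommGroup M] [Module R M]
    [Module.FinitePresentation R M] {J : Ideal R} {m : M} (hm : ∀ φ : M →ₗ[R] R, φ m ∈ J)
    (g : M →ₗ[R] S) : g m ∈ J.map (algebraMap R S) := by
  obtain ⟨k, a, y, rfl⟩ := Module.Flat.exists_factorization_of_finitePresentation g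
  rw [LinearMap.comp_apply, ← Finsupp.sum_single (a m), map_finsuppSum]
  refine Submodule.sum_mem _ fun i _ => ?_
  dsimp only
  rw [← Finsupp.smul_single_one, map_smul, Algebra.smul_def]
  exact Ideal.mul_mem_right _ _ (Ideal.mem_map_of_mem _ (hm (Finsupp.lapply i ∘ₗ a)))

def FrobeniusPushforward (R : Type*) (_p _e : ℕ) : Type _ := R

namespace FrobeniusPushforward

variable (R : Type*) [CommRing R] (p e : ℕ)

instance : AddCommGroup (FrobeniusPushforward R p e) := inferInstanceAs (AddCommGroup R)

def of : R ≃+ FrobeniusPushforward R p e := AddEquiv.refl R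

variable [ExpChar R p]

instance : Module R (FrobeniusPushforward R p e) := Module.compHom R (iterateFrobenius R p e)

variable {R p e}

theorem smul_of (a x : R) : a • of R p e x = of R p e (a ^ p ^ e * x) := rfl

theorem isCartier_comp_of (φ : FrobeniusPushforward R p e →ₗ[R] R) :
    IsCartier p e ((φ : FrobeniusPushforward R p e →+ R).comp (of R p e).toAddMonoidHom) := by
  intro a x
  simp only [AddMonoidHom.coe_comp, AddMonoidHom.coe_coe, Function.comp_apply,
    AddEquiv.coe_toAddMonoidHom, ← smul_of, map_smul, smul_eq_mul]

def linearMapOfIsCartier {S : Type*} [CommRing S] [Algebra R S] {ψ : S →+ S}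
    (hψ : IsCartier p e ψ) : FrobeniusPushforward R p e →ₗ[R] S where
  toFun x := ψ (algebraMap R S ((of R p e).symm x))
  map_add' x y := by simp only [map_add]
  map_smul' a x := by
    rw [← (of R p e).apply_symm_apply x, smul_of]
    simp only [AddEquiv.symm_apply_apply, map_mul, map_pow, Algebra.smul_def, RingHom.id_apply]
    exact hψ _ _

theorem linearMapOfIsCartier_of {S : Type*} [CommRing S] [Algebra R S] {ψ : S →+ S}
    (hψ : IsCartier p e ψ) (x : R) : linearMapOfIsCartier hψ (of R p e x) = ψ (algebraMap R S x) :=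
  rfl

theorem finite_of_fFinite (h : FFinite p R) : Module.Finite R (FrobeniusPushforward R p e) := by
  classical
  obtain ⟨s, hs⟩ := h e
  refine ⟨⟨s.image (of R p e), eq_top_iff.mpr fun x _ => ?_⟩⟩
  obtain ⟨c, hc⟩ := hs ((of R p e).symm x)
  rw [← (of R p e).apply_symm_apply x, hc, map_sum]
  refine Submodule.sum_mem _ fun y hy => ?_
  rw [← smul_of]
  exact Submodule.smul_mem _ _
    (Submodule.subset_span (Finset.mem_coe.mpr (Finset.mem_image_of_mem _ hy)))

end FrobeniusPushforward

theorem algebraMap_mem_cartierContraction_of_flat {R S : Type*} [CommRing R] [CommRing S]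
    [Algebra R S] [Module.Flat R S] [IsNoetherianRing R] {p : ℕ} [ExpChar R p] (hFF : FFinite p R)
    {e : ℕ} {J : Ideal R} {f : R} (hf : f ∈ cartierContraction p e J) :
    algebraMap R S f ∈ cartierContraction p e (J.map (algebraMap R S)) := by
  intro ψ hψ
  have := FrobeniusPushforward.finite_of_fFinite (e := e) hFF
  have := Module.finitePresentation_of_finite R (FrobeniusPushforward R p e)
  rw [← FrobeniusPushforward.linearMapOfIsCartier_of hψ]
  exact Module.Flat.apply_mem_map_of_forall_dual_apply_mem
    (fun φ => hf _ (FrobeniusPushforward.isCartier_comp_of φ)) _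

section

variable {R : Type*} [CommRing R]

theorem frobeniusPower_mul_le (K L : Ideal R) (q : ℕ) :
    frobeniusPower K q * frobeniusPower L q ≤ frobeniusPower (K * L) q := by
  rw [frobeniusPower, frobeniusPower, Ideal.span_mul_span']
  refine Ideal.span_mono ?_
  rintro _ ⟨_, ⟨a, ha, rfl⟩, _, ⟨b, hb, rfl⟩, rfl⟩
  exact ⟨a * b, Ideal.mul_mem_mul ha hb, mul_pow a b q⟩

theorem frobeniusPower_pow_le (K : Ideal R) (q n : ℕ) :
    frobeniusPower K q ^ n ≤ frobeniusPower (K ^ n) q := by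
  induction n with
  | zero =>
    rw [pow_zero, pow_zero, Ideal.one_eq_top, top_le_iff, Ideal.eq_top_iff_one]
    exact Ideal.subset_span ⟨1, Submodule.mem_top, one_pow q⟩
  | succ n ih =>
    rw [pow_succ, pow_succ]
    exact (Ideal.mul_mono_left ih).trans (frobeniusPower_mul_le _ _ q)

theorem exists_pow_le_frobeniusPower_s14 {I : Ideal R} (hI : I.FG) (q : ℕ) :
    ∃ c, I ^ c ≤ frobeniusPower I q :=
  Ideal.exists_pow_le_of_le_radical_of_fg
    (fun a ha => ⟨q, Ideal.subset_span ⟨a, ha, rfl⟩⟩) hI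

theorem IsCartier.map_mem_of_mem_frobeniusPower {p e : ℕ} {φ : R →+ R} (hφ : IsCartier p e φ)
    {K : Ideal R} {x : R} (hx : x ∈ frobeniusPower K (p ^ e)) : φ x ∈ K := by
  suffices h : ∀ y, φ (y * x) ∈ K by simpa using h 1
  induction hx using Submodule.span_induction with
  | mem _ h =>
    obtain ⟨a, ha, rfl⟩ := h
    intro y
    rw [mul_comm, hφ]
    exact K.mul_mem_right _ ha
  | zero => simp
  | add x z _ _ hx hz => intro y; simpa [mul_add] using K.add_mem (hx y) (hz y)
  | smul b x _ hx => intro y; simpa [mul_assoc] using hx (y * b)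

theorem IsCartier.exists_map_pow_mul_le {p e : ℕ} {φ : R →+ R} (hφ : IsCartier p e φ)
    {I : Ideal R} (hI : I.FG) : ∃ c, ∀ n, ∀ x ∈ I ^ (c * n), φ x ∈ I ^ n := by
  obtain ⟨c, hc⟩ := exists_pow_le_frobeniusPower_s14 hI (p ^ e)
  refine ⟨c, fun n x hx => hφ.map_mem_of_mem_frobeniusPower ?_⟩
  rw [pow_mul] at hx
  exact frobeniusPower_pow_le I _ n (Ideal.pow_right_mono hc n hx)

end

namespace AdicCompletion

variable {R : Type*} [CommRing R] {I : Ideal R}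

theorem val_eq_mk_of_val_eq_mk {x : AdicCompletion I R} {m n : ℕ} (hmn : m ≤ n) {r : R}
    (hr : x.val n = Ideal.Quotient.mk _ r) : x.val m = Ideal.Quotient.mk _ r := by
  rw [← x.property hmn, hr]; rfl

noncomputable def extendLevel (φ : R →+ R) (c : ℕ) (x : AdicCompletion I R) (n : ℕ) :
    R ⧸ (I ^ n • ⊤ : Ideal R) :=
  Ideal.Quotient.mk _ (φ (Ideal.Quotient.mk_surjective (x.val (c * n))).choose)

theorem extendLevel_eq {φ : R →+ R} {c : ℕ} (hφ : ∀ n, ∀ x ∈ I ^ (c * n), φ x ∈ I ^ n)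
    {x : AdicCompletion I R} {n : ℕ} {r : R} (hr : x.val (c * n) = Ideal.Quotient.mk _ r) :
    extendLevel φ c x n = Ideal.Quotient.mk _ (φ r) := by
  have h := Ideal.Quotient.eq.mp
    ((Ideal.Quotient.mk_surjective (x.val (c * n))).choose_spec.trans hr)
  refine Ideal.Quotient.eq.mpr ?_
  have smul_top : ∀ k, (I ^ k • ⊤ : Ideal R) = I ^ k := fun k => by simp
  rw [← _root_.map_sub, smul_top]
  exact hφ n _ ((smul_top _).le h)

noncomputable def extendAddMonoidHom (φ : R →+ R) (c : ℕ)
    (hφ : ∀ n, ∀ x ∈ I ^ (c * n), φ x ∈ I ^ n) : AdicCompletion I R →+ AdicCompletion I R where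
  toFun x := ⟨extendLevel φ c x, fun {m n} hmn => by
    obtain ⟨r, hr⟩ := Ideal.Quotient.mk_surjective (x.val (c * n))
    rw [extendLevel_eq hφ hr.symm,
      extendLevel_eq hφ (val_eq_mk_of_val_eq_mk (Nat.mul_le_mul_left c hmn) hr.symm)]
    rfl⟩
  map_zero' := by
    ext n
    have h0 : (0 : AdicCompletion I R).val (c * n) = Ideal.Quotient.mk _ 0 :=
      (_root_.map_zero _).symm
    exact (extendLevel_eq hφ h0).trans (by rw [_root_.map_zero φ, _root_.map_zero]; rfl)
  map_add' x y := by
    ext n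
    obtain ⟨r, hr⟩ := Ideal.Quotient.mk_surjective (x.val (c * n))
    obtain ⟨s, hs⟩ := Ideal.Quotient.mk_surjective (y.val (c * n))
    have hrs : (x + y).val (c * n) = Ideal.Quotient.mk _ (r + s) := by
      rw [map_add, hr, hs]; rfl
    exact (extendLevel_eq hφ hrs).trans (by
      rw [map_add, map_add, ← extendLevel_eq hφ hr.symm, ← extendLevel_eq hφ hs.symm]; rfl)

theorem extendAddMonoidHom_val {φ : R →+ R} {c : ℕ} (hφ : ∀ n, ∀ x ∈ I ^ (c * n), φ x ∈ I ^ n)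
    {x : AdicCompletion I R} {n : ℕ} {r : R} (hr : x.val (c * n) = Ideal.Quotient.mk _ r) :
    (extendAddMonoidHom φ c hφ x).val n = Ideal.Quotient.mk _ (φ r) :=
  extendLevel_eq hφ hr

theorem extendAddMonoidHom_algebraMap {φ : R →+ R} {c : ℕ}
    (hφ : ∀ n, ∀ x ∈ I ^ (c * n), φ x ∈ I ^ n) (r : R) :
    extendAddMonoidHom φ c hφ (algebraMap R _ r) = algebraMap R _ (φ r) :=
  ext fun _ => extendAddMonoidHom_val hφ rfl

theorem isCartier_extendAddMonoidHom {p e : ℕ} {φ : R →+ R} (hφC : IsCartier p e φ) {c : ℕ}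
    (hφ : ∀ n, ∀ x ∈ I ^ (c * n), φ x ∈ I ^ n) : IsCartier p e (extendAddMonoidHom φ c hφ) := by
  intro a x
  ext n
  -- lifts at level `c * n + n` compute `a` at level `n` and both arguments at level `c * n`
  obtain ⟨α, hα⟩ := Ideal.Quotient.mk_surjective (a.val (c * n + n))
  obtain ⟨ξ, hξ⟩ := Ideal.Quotient.mk_surjective (x.val (c * n + n))
  have hlow : c * n ≤ c * n + n := Nat.le_add_right _ _
  have hprod : (a ^ p ^ e * x).val (c * n) = Ideal.Quotient.mk _ (α ^ p ^ e * ξ) := by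
    have hpow : (a ^ p ^ e).val (c * n) = a.val (c * n) ^ p ^ e := rfl
    rw [map_mul, map_pow, val_mul, hpow, val_eq_mk_of_val_eq_mk hlow hα.symm,
      val_eq_mk_of_val_eq_mk hlow hξ.symm]
  rw [val_mul, extendAddMonoidHom_val hφ hprod,
    extendAddMonoidHom_val hφ (val_eq_mk_of_val_eq_mk hlow hξ.symm), hφC,
    val_eq_mk_of_val_eq_mk (Nat.le_add_left _ _) hα.symm, map_mul]

end AdicCompletion

theorem mem_cartierContraction_of_algebraMap_mem {R : Type*} [CommRing R] {I : Ideal R}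
    (hI : I.FG) [Module.FaithfullyFlat R (AdicCompletion I R)] {p e : ℕ} {J : Ideal R} {f : R}
    (hf : algebraMap R (AdicCompletion I R) f ∈
      cartierContraction p e (J.map (algebraMap R (AdicCompletion I R)))) :
    f ∈ cartierContraction p e J := by
  intro φ hφ
  obtain ⟨c, hc⟩ := hφ.exists_map_pow_mul_le hI
  have h := hf _ (AdicCompletion.isCartier_extendAddMonoidHom hφ hc)
  rw [AdicCompletion.extendAddMonoidHom_algebraMap] at h
  rwa [← Ideal.comap_map_eq_self_of_faithfullyFlat (B := AdicCompletion I R) J]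

theorem mem_cartierContraction_iff_mem_completion_general {R : Type*} [CommRing R]
    [IsLocalRing R] [IsNoetherianRing R]
    (p : ℕ) (hp : p.Prime) [CharP R p] (hFF : FFinite p R)
    (J : Ideal R) (e : ℕ) (f : R) :
    f ∈ cartierContraction p e J ↔
      algebraMap R (AdicCompletion (IsLocalRing.maximalIdeal R) R) f ∈
        cartierContraction p e
          (Ideal.map (algebraMap R (AdicCompletion (IsLocalRing.maximalIdeal R) R)) J) := by
  have : Fact p.Prime := ⟨hp⟩
  have : Module.FaithfullyFlat R (AdicCompletion (IsLocalRing.maximalIdeal R) R) :=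
    .of_flat_of_isLocalHom
  exact ⟨algebraMap_mem_cartierContraction_of_flat hFF,
    mem_cartierContraction_of_algebraMap_mem (IsLocalRing.maximalIdeal R).fg_of_isNoetherianRing⟩

/-- For an `F`-finite `F`-pure Noetherian local ring `(R, 𝔪)` of prime
characteristic `p`, `f ∈ J_e` iff `f ∈ (J R̂)_e`, where `R̂` is the `𝔪`-adic completion:
Cartier contraction is compatible with completion. -/
theorem mem_cartierContraction_iff_mem_completion {R : Type*} [CommRing R]
    [IsLocalRing R] [IsNoetherianRing R]
    (p : ℕ) (hp : p.Prime) [CharP R p] (hFF : FFinite p R) (hFP : FPure p R)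
    (J : Ideal R) (e : ℕ) (f : R) :
    f ∈ cartierContraction p e J ↔
      algebraMap R (AdicCompletion (IsLocalRing.maximalIdeal R) R) f ∈
        cartierContraction p e
          (Ideal.map (algebraMap R (AdicCompletion (IsLocalRing.maximalIdeal R) R)) J) :=
  mem_cartierContraction_iff_mem_completion_general p hp hFF J e f
end
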